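/- arXiv:1911.00004 — 4 statements merged into one kernel-verified Lean document; each statement's English description precedes it below -/
import Mathlib

section
/- If a vector N = N⁽¹⁾ ⊗ ... ⊗ N⁽ⁿ⁾ is a tensor product of linear maps on finite-dimensional spaces and N annihilates a fully entangled state |ψ⟩ (i.e., every single-party reduced density matrix of |ψ⟩ has full rank), then at least two of the factors N⁽ⁱ⁾ are singular. -/
open Matrix BigOperators

/-- The tensor product operator `N⁽¹⁾ ⊗ ... ⊗ N⁽ⁿ⁾` acting on `⊗ᵢ ℂ^{dᵢ}`. -/
noncomputable def tensorOp {n : ℕ} {d : Fin n → ℕ} (N : ∀ i, Matrix (Fin (d i)) (Fin (d i)) ℂ) :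
    Matrix (∀ i, Fin (d i)) (∀ i, Fin (d i)) ℂ :=
  fun f g => ∏ i, N i (f i) (g i)

/-- The single-party reduced density matrix of `ψ` at site `i`. -/
noncomputable def reduced {n : ℕ} {d : Fin n → ℕ} (ψ : (∀ i, Fin (d i)) → ℂ) (i : Fin n) :
    Matrix (Fin (d i)) (Fin (d i)) ℂ :=
  fun a b => ∑ f : ∀ j, Fin (d j),
    if f i = a then ψ f * star (ψ (Function.update f i b)) else 0

/-- A state is fully entangled if every single-party reduced density matrix has full rank. -/
noncomputable def FullyEntangled {n : ℕ} {d : Fin n → ℕ} (ψ : (∀ i, Fin (d i)) → ℂ) : Prop :=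
  ∀ i, (reduced ψ i).rank = d i

lemma tensorOp_mul {n : ℕ} {d : Fin n → ℕ} (M N : ∀ i, Matrix (Fin (d i)) (Fin (d i)) ℂ) :
    tensorOp M * tensorOp N = tensorOp (fun i => M i * N i) := by
  ext f g
  rw [Matrix.mul_apply]
  show ∑ h : ∀ i, Fin (d i), (∏ i, M i (f i) (h i)) * ∏ i, N i (h i) (g i)
      = ∏ i, (M i * N i) (f i) (g i)
  simp only [Matrix.mul_apply]
  rw [Finset.prod_univ_sum, Fintype.piFinset_univ]
  exact Finset.sum_congr rfl fun h _ => (Finset.prod_mul_distrib).symm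

lemma isUnit_of_rank_eq_card {m : ℕ} (A : Matrix (Fin m) (Fin m) ℂ) (h : A.rank = m) :
    IsUnit A := by
  rw [← Matrix.mulVec_surjective_iff_isUnit]
  have htop : LinearMap.range A.mulVecLin = ⊤ := by
    apply Submodule.eq_top_of_finrank_eq
    rw [← Matrix.rank, h]
    simp
  intro v
  obtain ⟨w, hw⟩ := LinearMap.range_eq_top.mp htop v
  exact ⟨w, hw⟩

lemma tensorOp_single_apply {n : ℕ} {d : Fin n → ℕ} (i₀ : Fin n)
    (A : ∀ i, Matrix (Fin (d i)) (Fin (d i)) ℂ)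
    (ψ : (∀ i, Fin (d i)) → ℂ) (f : ∀ i, Fin (d i)) :
    (tensorOp (fun i => if i = i₀ then A i else 1) *ᵥ ψ) f
      = ∑ a, A i₀ (f i₀) a * ψ (Function.update f i₀ a) := by
  show ∑ g : ∀ i, Fin (d i), (∏ i, (if i = i₀ then A i else 1) (f i) (g i)) * ψ g = _
  have hprod : ∀ g : ∀ i, Fin (d i),
      (∏ i, (if i = i₀ then A i else 1) (f i) (g i))
        = A i₀ (f i₀) (g i₀) * if Function.update f i₀ (g i₀) = g then 1 else 0 := by
    intro g
    rw [← Finset.mul_prod_erase Finset.univ _ (Finset.mem_univ i₀)]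
    congr 1
    · simp
    · have : ∀ i ∈ Finset.univ.erase i₀,
          (if i = i₀ then A i else 1) (f i) (g i) = if f i = g i then (1:ℂ) else 0 := by
        intro i hi
        rw [if_neg (Finset.mem_erase.mp hi).1, Matrix.one_apply]
      rw [Finset.prod_congr rfl this, Finset.prod_boole]
      congr 1
      simp only [eq_iff_iff]
      constructor
      · intro h
        funext i
        by_cases hi : i = i₀
        · subst hi; simp
        · rw [Function.update_of_ne hi]
          exact h i (Finset.mem_erase.mpr ⟨hi, Finset.mem_univ i⟩)
      · intro h i hi
        have hi' := (Finset.mem_erase.mp hi).1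
        conv_rhs => rw [← h]
        rw [Function.update_of_ne hi']
  rw [Finset.sum_congr rfl fun g _ => by rw [hprod g]]
  rw [Finset.sum_congr rfl (fun g _ => by rw [mul_ite, mul_one, mul_zero, ite_mul, zero_mul])]
  rw [← Finset.sum_filter]
  apply Finset.sum_nbij' (i := fun g => g i₀) (j := fun a => Function.update f i₀ a)
  · intro g hg; exact Finset.mem_univ _
  · intro a ha
    simp [Finset.mem_filter]
  · intro g hg
    exact (Finset.mem_filter.mp hg).2
  · intro a ha
    simp
  · intro g hg
    rw [(Finset.mem_filter.mp hg).2]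

/-- If a tensor product of (nonzero) local operators annihilates a fully entangled state,
then at least two of the factors are singular. -/
theorem annihilator_singular_at_two_sites {n : ℕ} {d : Fin n → ℕ} (hn : 2 ≤ n)
    (ψ : (∀ i, Fin (d i)) → ℂ) (hψ0 : ψ ≠ 0) (hψ : FullyEntangled ψ)
    (N : ∀ i, Matrix (Fin (d i)) (Fin (d i)) ℂ) (hN0 : ∀ i, N i ≠ 0)
    (hann : (tensorOp N) *ᵥ ψ = 0) :
    ∃ i j, i ≠ j ∧ ¬ IsUnit (N i) ∧ ¬ IsUnit (N j) := by
  by_contra hcon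
  push_neg at hcon
  obtain ⟨i₀, hunit⟩ : ∃ i₀ : Fin n, ∀ j, j ≠ i₀ → IsUnit (N j) := by
    by_cases h : ∀ i, IsUnit (N i)
    · exact ⟨⟨0, by omega⟩, fun j _ => h j⟩
    · push_neg at h
      obtain ⟨i₀, hi₀⟩ := h
      exact ⟨i₀, fun j hj => hcon i₀ j (Ne.symm hj) hi₀⟩
  have hd : d i₀ ≠ 0 := by
    intro h
    apply hN0 i₀
    ext a b
    exact absurd a.is_lt (by omega)
  have hMN : (fun i => (if i = i₀ then 1 else (N i)⁻¹) * N i)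
      = fun i => if i = i₀ then N i else 1 := by
    funext i
    by_cases h : i = i₀
    · simp [h]
    · simp only [if_neg h]
      exact Matrix.nonsing_inv_mul _ ((Matrix.isUnit_iff_isUnit_det _).mp (hunit i h))
  have hPψ : tensorOp (fun i => if i = i₀ then N i else 1) *ᵥ ψ = 0 := by
    rw [← hMN, ← tensorOp_mul, ← Matrix.mulVec_mulVec, hann, Matrix.mulVec_zero]
  have hstar : ∀ (x : Fin (d i₀)) (f : ∀ i, Fin (d i)),
      ∑ a, N i₀ x a * ψ (Function.update f i₀ a) = 0 := by
    intro x f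
    have h1 := congrFun hPψ (Function.update f i₀ x)
    rw [tensorOp_single_apply] at h1
    simpa [Function.update_idem] using h1
  obtain ⟨x₀, a₀, hx⟩ : ∃ x a, N i₀ x a ≠ 0 := by
    by_contra h
    push_neg at h
    exact hN0 i₀ (by ext x a; exact h x a)
  set r : Fin (d i₀) → ℂ := fun a => N i₀ x₀ a with hr
  have hrρ : r ᵥ* reduced ψ i₀ = 0 := by
    funext b
    have step1 : (r ᵥ* reduced ψ i₀) b
        = ∑ f, r (f i₀) * (ψ f * star (ψ (Function.update f i₀ b))) := by
      show (∑ a, r a * reduced ψ i₀ a b) = _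
      simp only [reduced, Finset.mul_sum]
      rw [Finset.sum_comm]
      refine Finset.sum_congr rfl fun f _ => ?_
      simp [mul_ite]
    have hinv : ∀ p : ((∀ i, Fin (d i)) × Fin (d i₀)),
        (fun q : ((∀ i, Fin (d i)) × Fin (d i₀)) => (Function.update q.1 i₀ q.2, q.1 i₀))
          ((fun q : ((∀ i, Fin (d i)) × Fin (d i₀)) => (Function.update q.1 i₀ q.2, q.1 i₀)) p)
          = p := by
      intro p
      simp [Function.update_idem]
    let σ : ((∀ i, Fin (d i)) × Fin (d i₀)) ≃ ((∀ i, Fin (d i)) × Fin (d i₀)) :=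
      ⟨fun p => (Function.update p.1 i₀ p.2, p.1 i₀),
       fun p => (Function.update p.1 i₀ p.2, p.1 i₀), hinv, hinv⟩
    have key : ∑ p : ((∀ i, Fin (d i)) × Fin (d i₀)),
        r p.2 * (ψ (Function.update p.1 i₀ p.2) * star (ψ (Function.update p.1 i₀ b))) = 0 := by
      rw [Fintype.sum_prod_type]
      refine Finset.sum_eq_zero fun f _ => ?_
      have : ∑ a, r a * (ψ (Function.update f i₀ a) * star (ψ (Function.update f i₀ b)))
          = (∑ a, r a * ψ (Function.update f i₀ a)) * star (ψ (Function.update f i₀ b)) := by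
        rw [Finset.sum_mul]; exact Finset.sum_congr rfl fun a _ => (mul_assoc _ _ _).symm
      rw [this, hstar x₀ f, zero_mul]
    have key2 : (↑(d i₀) : ℂ) * ∑ f, r (f i₀) * (ψ f * star (ψ (Function.update f i₀ b))) = 0 := by
      rw [← key, ← Equiv.sum_comp σ
        (fun p => r p.2 * (ψ (Function.update p.1 i₀ p.2) * star (ψ (Function.update p.1 i₀ b))))]
      have hterm : ∀ p : ((∀ i, Fin (d i)) × Fin (d i₀)),
          r ((σ p).2) * (ψ (Function.update (σ p).1 i₀ (σ p).2)
            * star (ψ (Function.update (σ p).1 i₀ b)))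
            = r (p.1 i₀) * (ψ p.1 * star (ψ (Function.update p.1 i₀ b))) := by
        intro p
        show r (p.1 i₀) * (ψ (Function.update (Function.update p.1 i₀ p.2) i₀ (p.1 i₀))
            * star (ψ (Function.update (Function.update p.1 i₀ p.2) i₀ b))) = _
        simp [Function.update_idem]
      rw [Finset.sum_congr rfl fun p _ => hterm p]
      rw [Fintype.sum_prod_type]
      simp [Finset.sum_const, Finset.card_univ, nsmul_eq_mul, Finset.mul_sum]
    have hsum : ∑ f, r (f i₀) * (ψ f * star (ψ (Function.update f i₀ b))) = 0 := by
      have hd' : (↑(d i₀) : ℂ) ≠ 0 := Nat.cast_ne_zero.mpr hd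
      exact (mul_eq_zero.mp key2).resolve_left hd'
    rw [step1, hsum]
    rfl
  have hρ : IsUnit (reduced ψ i₀) := isUnit_of_rank_eq_card _ (hψ i₀)
  have hdet : IsUnit (reduced ψ i₀).det := (Matrix.isUnit_iff_isUnit_det _).mp hρ
  have hr0 : r = 0 := by
    have h2 := congrArg (fun v => v ᵥ* (reduced ψ i₀)⁻¹) hrρ
    simpa [Matrix.vecMul_vecMul, Matrix.mul_nonsing_inv _ hdet] using h2
  exact hx (congrFun hr0 a₀)
end

section
/- Let T_ψ be an abelian group of operators each of which squares to the identity, containing a nontrivial element A with Tr(HA) ≠ 0 for a positive semidefinite H, and suppose Tr(P) = 0 for every nontrivial P ∈ T_ψ. Then there do not exist probabilities pₖ ≥ 0, ∑ₖ pₖ = 1, and elements Sₖ ∈ T_ψ such that ∑ₖ pₖ Sₖ† H Sₖ = r·𝟙 for any r > 0. More precisely: if all Sₖ ∈ T_ψ and T_ψ is abelian with each element Hermitian, then Tr((∑ₖ pₖ Sₖ†HSₖ) A) = Tr(HA) ≠ 0 while Tr(r·𝟙·A) = 0, a contradiction. -/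
open Matrix BigOperators
open scoped ComplexOrder

/-- If all `Sₖ` belong to an abelian group of Hermitian involutions and `A` is a traceless
element of it commuting with every `Sₖ`, with `Tr(HA) ≠ 0` for a positive semidefinite `H`,
then `∑ₖ pₖ Sₖ† H Sₖ ≠ r·𝟙`: indeed `Tr((∑ₖ pₖ Sₖ†HSₖ)A) = Tr(HA) ≠ 0` while
`Tr(r·𝟙·A) = 0`. -/
theorem no_sep1_with_traceless_symmetry {D : ℕ} (H A : Matrix (Fin D) (Fin D) ℂ)
    (hH : H.PosSemidef)
    (K : ℕ) (S : Fin K → Matrix (Fin D) (Fin D) ℂ) (p : Fin K → ℝ) (r : ℝ)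
    (hA1 : A ≠ 1) (hAtr : A.trace = 0) (hHA : (H * A).trace ≠ 0)
    (hSA : ∀ k, S k * A = A * S k)
    (hS2 : ∀ k, S k * S k = 1)
    (hSH : ∀ k, (S k)ᴴ = S k)
    (hp : ∀ k, 0 ≤ p k) (hps : ∑ k, p k = 1) (hr : 0 < r) :
    (∑ k, (p k : ℂ) • ((S k)ᴴ * H * S k) ≠ (r : ℂ) • 1) ∧
    ((∑ k, (p k : ℂ) • ((S k)ᴴ * H * S k)) * A).trace = (H * A).trace ∧
    (((r : ℂ) • (1 : Matrix (Fin D) (Fin D) ℂ)) * A).trace = 0 := by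
  have key : ∀ k, ((S k)ᴴ * H * S k * A).trace = (H * A).trace := by
    intro k
    rw [hSH k]
    calc (S k * H * S k * A).trace = (S k * H * (S k * A)).trace := by rw [Matrix.mul_assoc]
      _ = (S k * H * (A * S k)).trace := by rw [hSA k]
      _ = (S k * (H * A * S k)).trace := by simp only [Matrix.mul_assoc]
      _ = (H * A * S k * S k).trace := by rw [Matrix.trace_mul_comm]
      _ = (H * A * (S k * S k)).trace := by rw [Matrix.mul_assoc]
      _ = (H * A).trace := by rw [hS2 k, Matrix.mul_one]
  have h2 : ((∑ k, (p k : ℂ) • ((S k)ᴴ * H * S k)) * A).trace = (H * A).trace := by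
    rw [Matrix.sum_mul, Matrix.trace_sum]
    have : ∀ k, (((p k : ℂ) • ((S k)ᴴ * H * S k)) * A).trace = (p k : ℂ) * (H * A).trace := by
      intro k
      rw [Matrix.smul_mul, Matrix.trace_smul, key k, smul_eq_mul]
    rw [Finset.sum_congr rfl fun k _ => this k, ← Finset.sum_mul]
    have : (∑ k, (p k : ℂ)) = 1 := by
      rw [← Complex.ofReal_sum, hps, Complex.ofReal_one]
    rw [this, one_mul]
  have h3 : (((r : ℂ) • (1 : Matrix (Fin D) (Fin D) ℂ)) * A).trace = 0 := by
    rw [Matrix.smul_mul, Matrix.one_mul, Matrix.trace_smul, hAtr, smul_zero]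
  refine ⟨?_, h2, h3⟩
  intro heq
  rw [heq, h3] at h2
  exact hHA h2.symm
end

section
/- With the Kraus operators M₁,...,M₈ on (ℂ²)^{⊗3} defined as Mᵢ = a₁ h Qᵢ' for i = 1,2,3 with a₁ = √(2a³/((½+a)²(½−a)(⅛+a³))), M₄ = √(2a³/((½−a)³(⅛+a³))) h Q₄', M₅ = ½√(1/(⅛+a³)) h, M₆ = M₅A₁, M₇ = M₅A₃, M₈ = M₅A₁A₃, where h is any operator with h†h = (½𝟙+aZ)⊗(½𝟙+aX)⊗(½𝟙+aZ) and a ∈ (0,½), the completeness relation ∑ₖ₌₁⁸ Mₖ†Mₖ = 𝟙 holds. -/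
open Matrix BigOperators
open scoped Kronecker

noncomputable def PX : Matrix (Fin 2) (Fin 2) ℂ := !![0, 1; 1, 0]
noncomputable def PZ : Matrix (Fin 2) (Fin 2) ℂ := !![1, 0; 0, -1]

noncomputable def Q' : Fin 4 → Matrix ((Fin 2 × Fin 2) × Fin 2) ((Fin 2 × Fin 2) × Fin 2) ℂ :=
  ![(1/8 : ℂ) • (((1 + PZ) ⊗ₖ (1 + PX)) ⊗ₖ (1 - PZ)),
    (1/8 : ℂ) • (((1 + PZ) ⊗ₖ (1 - PX)) ⊗ₖ (1 + PZ)),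
    (1/8 : ℂ) • (((1 - PZ) ⊗ₖ (1 + PX)) ⊗ₖ (1 + PZ)),
    (1/8 : ℂ) • (((1 - PZ) ⊗ₖ (1 - PX)) ⊗ₖ (1 - PZ))]

noncomputable def A1 : Matrix ((Fin 2 × Fin 2) × Fin 2) ((Fin 2 × Fin 2) × Fin 2) ℂ :=
  (PX ⊗ₖ PZ) ⊗ₖ PZ
noncomputable def A3 : Matrix ((Fin 2 × Fin 2) × Fin 2) ((Fin 2 × Fin 2) × Fin 2) ℂ :=
  (PZ ⊗ₖ PZ) ⊗ₖ PX

/-- The eight Kraus operators of the three-qubit SEP map. -/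
noncomputable def Kraus (a : ℝ) (h : Matrix ((Fin 2 × Fin 2) × Fin 2) ((Fin 2 × Fin 2) × Fin 2) ℂ) :
    Fin 8 → Matrix ((Fin 2 × Fin 2) × Fin 2) ((Fin 2 × Fin 2) × Fin 2) ℂ :=
  ![((Real.sqrt (2*a^3 / ((1/2 + a)^2 * (1/2 - a) * (1/8 + a^3))) : ℝ) : ℂ) • (h * Q' 0),
    ((Real.sqrt (2*a^3 / ((1/2 + a)^2 * (1/2 - a) * (1/8 + a^3))) : ℝ) : ℂ) • (h * Q' 1),
    ((Real.sqrt (2*a^3 / ((1/2 + a)^2 * (1/2 - a) * (1/8 + a^3))) : ℝ) : ℂ) • (h * Q' 2),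
    ((Real.sqrt (2*a^3 / ((1/2 - a)^3 * (1/8 + a^3))) : ℝ) : ℂ) • (h * Q' 3),
    ((1/2 * Real.sqrt (1 / (1/8 + a^3)) : ℝ) : ℂ) • h,
    (((1/2 * Real.sqrt (1 / (1/8 + a^3)) : ℝ) : ℂ) • h) * A1,
    (((1/2 * Real.sqrt (1 / (1/8 + a^3)) : ℝ) : ℂ) • h) * A3,
    (((1/2 * Real.sqrt (1 / (1/8 + a^3)) : ℝ) : ℂ) • h) * (A1 * A3)]

section Aux

/-- conjTranspose distributes over Kronecker products. -/
lemma kron_conjT {m n : Type*} [Fintype m] [Fintype n] [DecidableEq m] [DecidableEq n]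
    (A : Matrix m m ℂ) (B : Matrix n n ℂ) : (A ⊗ₖ B)ᴴ = Aᴴ ⊗ₖ Bᴴ := by
  ext ⟨i, j⟩ ⟨k, l⟩
  simp [Matrix.conjTranspose_apply, Matrix.kroneckerMap_apply, mul_comm]

lemma hermPZ : PZᴴ = PZ := by
  ext i j; fin_cases i <;> fin_cases j <;> simp [PZ, Matrix.conjTranspose_apply]

lemma hermPX : PXᴴ = PX := by
  ext i j; fin_cases i <;> fin_cases j <;> simp [PX, Matrix.conjTranspose_apply]

lemma l_Zp (β : ℂ) : (1 + PZ) * ((1/2:ℂ) • 1 + β • PZ) * (1 + PZ) = (2*(1/2+β)) • (1 + PZ) := by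
  ext i j
  fin_cases i <;> fin_cases j <;>
    (simp only [PZ, Matrix.mul_apply, Fin.sum_univ_two, Matrix.add_apply, Matrix.smul_apply,
      Matrix.one_apply, Matrix.cons_val', Matrix.cons_val_zero, Matrix.cons_val_one,
      Matrix.head_cons, Matrix.head_fin_const, Matrix.empty_val', Matrix.cons_val_fin_one,
      smul_eq_mul, if_true, if_false]
     norm_num
     try ring)

lemma l_Zm (β : ℂ) : (1 - PZ) * ((1/2:ℂ) • 1 + β • PZ) * (1 - PZ) = (2*(1/2-β)) • (1 - PZ) := by
  ext i j
  fin_cases i <;> fin_cases j <;>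
    (simp only [PZ, Matrix.mul_apply, Fin.sum_univ_two, Matrix.add_apply, Matrix.sub_apply,
      Matrix.smul_apply, Matrix.one_apply, Matrix.cons_val', Matrix.cons_val_zero,
      Matrix.cons_val_one, Matrix.head_cons, Matrix.head_fin_const, Matrix.empty_val',
      Matrix.cons_val_fin_one, smul_eq_mul, if_true, if_false]
     norm_num
     try ring)

lemma l_Xp (β : ℂ) : (1 + PX) * ((1/2:ℂ) • 1 + β • PX) * (1 + PX) = (2*(1/2+β)) • (1 + PX) := by
  ext i j
  fin_cases i <;> fin_cases j <;>
    (simp only [PX, Matrix.mul_apply, Fin.sum_univ_two, Matrix.add_apply, Matrix.smul_apply,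
      Matrix.one_apply, Matrix.cons_val', Matrix.cons_val_zero, Matrix.cons_val_one,
      Matrix.head_cons, Matrix.head_fin_const, Matrix.empty_val', Matrix.cons_val_fin_one,
      smul_eq_mul, if_true, if_false]
     norm_num
     try ring)

lemma l_Xm (β : ℂ) : (1 - PX) * ((1/2:ℂ) • 1 + β • PX) * (1 - PX) = (2*(1/2-β)) • (1 - PX) := by
  ext i j
  fin_cases i <;> fin_cases j <;>
    (simp only [PX, Matrix.mul_apply, Fin.sum_univ_two, Matrix.add_apply, Matrix.sub_apply,
      Matrix.smul_apply, Matrix.one_apply, Matrix.cons_val', Matrix.cons_val_zero,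
      Matrix.cons_val_one, Matrix.head_cons, Matrix.head_fin_const, Matrix.empty_val',
      Matrix.cons_val_fin_one, smul_eq_mul, if_true, if_false]
     norm_num
     try ring)

lemma c_XD (β : ℂ) : PX * ((1/2:ℂ) • 1 + β • PZ) * PX = (1/2:ℂ) • 1 + (-β) • PZ := by
  ext i j
  fin_cases i <;> fin_cases j <;>
    (simp only [PZ, PX, Matrix.mul_apply, Fin.sum_univ_two, Matrix.add_apply, Matrix.smul_apply,
      Matrix.one_apply, Matrix.cons_val', Matrix.cons_val_zero, Matrix.cons_val_one,
      Matrix.head_cons, Matrix.head_fin_const, Matrix.empty_val', Matrix.cons_val_fin_one,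
      smul_eq_mul, if_true, if_false]
     norm_num
     try ring)

lemma c_ZE (β : ℂ) : PZ * ((1/2:ℂ) • 1 + β • PX) * PZ = (1/2:ℂ) • 1 + (-β) • PX := by
  ext i j
  fin_cases i <;> fin_cases j <;>
    (simp only [PZ, PX, Matrix.mul_apply, Fin.sum_univ_two, Matrix.add_apply, Matrix.smul_apply,
      Matrix.one_apply, Matrix.cons_val', Matrix.cons_val_zero, Matrix.cons_val_one,
      Matrix.head_cons, Matrix.head_fin_const, Matrix.empty_val', Matrix.cons_val_fin_one,
      smul_eq_mul, if_true, if_false]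
     norm_num
     try ring)

lemma c_ZD (β : ℂ) : PZ * ((1/2:ℂ) • 1 + β • PZ) * PZ = (1/2:ℂ) • 1 + β • PZ := by
  ext i j
  fin_cases i <;> fin_cases j <;>
    (simp only [PZ, Matrix.mul_apply, Fin.sum_univ_two, Matrix.add_apply, Matrix.smul_apply,
      Matrix.one_apply, Matrix.cons_val', Matrix.cons_val_zero, Matrix.cons_val_one,
      Matrix.head_cons, Matrix.head_fin_const, Matrix.empty_val', Matrix.cons_val_fin_one,
      smul_eq_mul, if_true, if_false]
     norm_num
     try ring)

lemma c_XE (β : ℂ) : PX * ((1/2:ℂ) • 1 + β • PX) * PX = (1/2:ℂ) • 1 + β • PX := by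
  ext i j
  fin_cases i <;> fin_cases j <;>
    (simp only [PZ, PX, Matrix.mul_apply, Fin.sum_univ_two, Matrix.add_apply, Matrix.smul_apply,
      Matrix.one_apply, Matrix.cons_val', Matrix.cons_val_zero, Matrix.cons_val_one,
      Matrix.head_cons, Matrix.head_fin_const, Matrix.empty_val', Matrix.cons_val_fin_one,
      smul_eq_mul, if_true, if_false]
     norm_num
     try ring)

lemma c13_D (β : ℂ) : (PZ * PX) * ((1/2:ℂ) • 1 + β • PZ) * (PX * PZ) = (1/2:ℂ) • 1 + (-β) • PZ := by
  ext i j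
  fin_cases i <;> fin_cases j <;>
    (simp only [PZ, PX, Matrix.mul_apply, Fin.sum_univ_two, Matrix.add_apply, Matrix.smul_apply,
      Matrix.one_apply, Matrix.cons_val', Matrix.cons_val_zero, Matrix.cons_val_one,
      Matrix.head_cons, Matrix.head_fin_const, Matrix.empty_val', Matrix.cons_val_fin_one,
      smul_eq_mul, if_true, if_false]
     norm_num
     try ring)

lemma c13_D' (β : ℂ) : (PX * PZ) * ((1/2:ℂ) • 1 + β • PZ) * (PZ * PX) = (1/2:ℂ) • 1 + (-β) • PZ := by
  ext i j
  fin_cases i <;> fin_cases j <;>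
    (simp only [PZ, PX, Matrix.mul_apply, Fin.sum_univ_two, Matrix.add_apply, Matrix.smul_apply,
      Matrix.one_apply, Matrix.cons_val', Matrix.cons_val_zero, Matrix.cons_val_one,
      Matrix.head_cons, Matrix.head_fin_const, Matrix.empty_val', Matrix.cons_val_fin_one,
      smul_eq_mul, if_true, if_false]
     norm_num
     try ring)

lemma c13_E (β : ℂ) : (PZ * PZ) * ((1/2:ℂ) • 1 + β • PX) * (PZ * PZ) = (1/2:ℂ) • 1 + β • PX := by
  ext i j
  fin_cases i <;> fin_cases j <;>
    (simp only [PZ, PX, Matrix.mul_apply, Fin.sum_univ_two, Matrix.add_apply, Matrix.smul_apply,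
      Matrix.one_apply, Matrix.cons_val', Matrix.cons_val_zero, Matrix.cons_val_one,
      Matrix.head_cons, Matrix.head_fin_const, Matrix.empty_val', Matrix.cons_val_fin_one,
      smul_eq_mul, if_true, if_false]
     norm_num
     try ring)

/-- The sum of the four projectors. -/
lemma Qsum : Q' 0 + Q' 1 + Q' 2 + Q' 3
    = (1/2:ℂ) • 1 - (1/2:ℂ) • ((PZ ⊗ₖ PX) ⊗ₖ PZ) := by
  ext x y
  obtain ⟨⟨i,j⟩,k⟩ := x; obtain ⟨⟨i',j'⟩,k'⟩ := y
  fin_cases i <;> fin_cases j <;> fin_cases k <;> fin_cases i' <;> fin_cases j' <;> fin_cases k' <;>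
    (simp only [Q', PZ, PX, Matrix.add_apply, Matrix.sub_apply, Matrix.smul_apply,
      Matrix.one_apply, Matrix.kroneckerMap_apply, Matrix.cons_val', Matrix.cons_val_zero,
      Matrix.cons_val_one, Matrix.head_cons, Matrix.head_fin_const, Matrix.empty_val',
      Matrix.cons_val_fin_one, smul_eq_mul, Matrix.cons_val_two, Matrix.cons_val_three,
      Matrix.tail_cons]
     norm_num [Prod.ext_iff])

set_option maxHeartbeats 2000000 in
/-- The sum of the four conjugated Hamiltonians. -/
lemma Hsum (α : ℂ) :
    ((((1/2:ℂ) • 1 + α • PZ) ⊗ₖ ((1/2:ℂ) • 1 + α • PX)) ⊗ₖ ((1/2:ℂ) • 1 + α • PZ))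
    + ((((1/2:ℂ) • 1 + (-α) • PZ) ⊗ₖ ((1/2:ℂ) • 1 + (-α) • PX)) ⊗ₖ ((1/2:ℂ) • 1 + α • PZ))
    + ((((1/2:ℂ) • 1 + α • PZ) ⊗ₖ ((1/2:ℂ) • 1 + (-α) • PX)) ⊗ₖ ((1/2:ℂ) • 1 + (-α) • PZ))
    + ((((1/2:ℂ) • 1 + (-α) • PZ) ⊗ₖ ((1/2:ℂ) • 1 + α • PX)) ⊗ₖ ((1/2:ℂ) • 1 + (-α) • PZ))
    = (1/2:ℂ) • 1 + (4*α^3) • ((PZ ⊗ₖ PX) ⊗ₖ PZ) := by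
  ext x y
  obtain ⟨⟨i,j⟩,k⟩ := x; obtain ⟨⟨i',j'⟩,k'⟩ := y
  fin_cases i <;> fin_cases j <;> fin_cases k <;> fin_cases i' <;> fin_cases j' <;> fin_cases k' <;>
    (simp only [PZ, PX, Matrix.add_apply, Matrix.smul_apply, Matrix.one_apply,
      Matrix.kroneckerMap_apply, Matrix.cons_val', Matrix.cons_val_zero, Matrix.cons_val_one,
      Matrix.head_cons, Matrix.head_fin_const, Matrix.empty_val', Matrix.cons_val_fin_one,
      smul_eq_mul]
     norm_num [Prod.ext_iff]
     try ring)

end Aux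

set_option maxHeartbeats 1000000 in
/-- The completeness relation `∑ₖ₌₁⁸ Mₖ†Mₖ = 𝟙` for the Kraus operators of the three-qubit
SEP map, for any `h` with `h†h = (½𝟙+aZ)⊗(½𝟙+aX)⊗(½𝟙+aZ)` and `a ∈ (0,½)`. -/
theorem kraus_completeness (a : ℝ) (ha0 : 0 < a) (ha : a < 1/2)
    (h : Matrix ((Fin 2 × Fin 2) × Fin 2) ((Fin 2 × Fin 2) × Fin 2) ℂ)
    (hh : hᴴ * h = ((((1/2 : ℂ) • 1 + (a : ℂ) • PZ) ⊗ₖ ((1/2 : ℂ) • 1 + (a : ℂ) • PX))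
        ⊗ₖ ((1/2 : ℂ) • 1 + (a : ℂ) • PZ))) :
    ∑ k : Fin 8, (Kraus a h k)ᴴ * Kraus a h k = 1 := by
  set α : ℂ := (a : ℂ) with hα
  set H : Matrix ((Fin 2 × Fin 2) × Fin 2) ((Fin 2 × Fin 2) × Fin 2) ℂ :=
    ((((1/2 : ℂ) • 1 + α • PZ) ⊗ₖ ((1/2 : ℂ) • 1 + α • PX)) ⊗ₖ ((1/2 : ℂ) • 1 + α • PZ))
    with hH
  -- positivity facts
  have h2a : (0:ℝ) < 1/2 - a := by linarith
  have h2a' : (0:ℝ) < 1/2 + a := by linarith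
  have h3a : (0:ℝ) < 1/8 + a^3 := by positivity
  -- general reduction of one Kraus term
  have key : ∀ (c : ℝ) (M : Matrix ((Fin 2 × Fin 2) × Fin 2) ((Fin 2 × Fin 2) × Fin 2) ℂ),
      ((c:ℂ) • (h * M))ᴴ * ((c:ℂ) • (h * M)) = ((c^2 : ℝ) : ℂ) • (Mᴴ * H * M) := by
    intro c M
    rw [Matrix.conjTranspose_smul, Matrix.smul_mul, Matrix.mul_smul, smul_smul,
      Matrix.conjTranspose_mul, Matrix.mul_assoc (Mᴴ), ← Matrix.mul_assoc hᴴ h M, hh,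
      ← Matrix.mul_assoc]
    congr 1
    rw [Complex.star_def, Complex.conj_ofReal]
    push_cast
    ring
  have key5 : (((1/2 * Real.sqrt (1 / (1/8 + a^3)) : ℝ) : ℂ) • h)ᴴ * (((1/2 * Real.sqrt (1 / (1/8 + a^3)) : ℝ) : ℂ) • h)
      = (((1/2 * Real.sqrt (1 / (1/8 + a^3)))^2 : ℝ) : ℂ) • H := by
    rw [Matrix.conjTranspose_smul, Matrix.smul_mul, Matrix.mul_smul, smul_smul, hh]
    congr 1
    rw [Complex.star_def, Complex.conj_ofReal]
    push_cast
    ring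
  have keyA : ∀ (c : ℝ) (A : Matrix ((Fin 2 × Fin 2) × Fin 2) ((Fin 2 × Fin 2) × Fin 2) ℂ),
      (((c:ℂ) • h) * A)ᴴ * (((c:ℂ) • h) * A) = ((c^2 : ℝ) : ℂ) • (Aᴴ * H * A) := by
    intro c A
    rw [Matrix.smul_mul]
    exact key c A
  -- square roots
  have hd1 : (0:ℝ) < (1/2 + a)^2 * (1/2 - a) * (1/8 + a^3) :=
    mul_pos (mul_pos (by positivity) h2a) h3a
  have hd4 : (0:ℝ) < (1/2 - a)^3 * (1/8 + a^3) := mul_pos (by positivity) h3a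
  have r1 : (Real.sqrt (2*a^3 / ((1/2 + a)^2 * (1/2 - a) * (1/8 + a^3))))^2
      = 2*a^3 / ((1/2 + a)^2 * (1/2 - a) * (1/8 + a^3)) :=
    Real.sq_sqrt (div_nonneg (by positivity) hd1.le)
  have r4 : (Real.sqrt (2*a^3 / ((1/2 - a)^3 * (1/8 + a^3))))^2
      = 2*a^3 / ((1/2 - a)^3 * (1/8 + a^3)) :=
    Real.sq_sqrt (div_nonneg (by positivity) hd4.le)
  have r5 : (1/2 * Real.sqrt (1 / (1/8 + a^3)))^2 = 1/(4*(1/8 + a^3)) := by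
    rw [mul_pow, Real.sq_sqrt (by positivity : (0:ℝ) ≤ 1 / (1/8 + a^3))]
    field_simp
    norm_num
  -- explicit forms of the Kraus operators
  have qe0 : Q' 0 = (1/8 : ℂ) • (((1 + PZ) ⊗ₖ (1 + PX)) ⊗ₖ (1 - PZ)) := rfl
  have qe1 : Q' 1 = (1/8 : ℂ) • (((1 + PZ) ⊗ₖ (1 - PX)) ⊗ₖ (1 + PZ)) := rfl
  have qe2 : Q' 2 = (1/8 : ℂ) • (((1 - PZ) ⊗ₖ (1 + PX)) ⊗ₖ (1 + PZ)) := rfl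
  have qe3 : Q' 3 = (1/8 : ℂ) • (((1 - PZ) ⊗ₖ (1 - PX)) ⊗ₖ (1 - PZ)) := rfl
  -- hermiticity of the projectors
  have star18 : star (1/8 : ℂ) = 1/8 := by norm_num
  have hpZ : (1 + PZ)ᴴ = 1 + PZ := by rw [Matrix.conjTranspose_add, Matrix.conjTranspose_one, hermPZ]
  have hmZ : (1 - PZ)ᴴ = 1 - PZ := by rw [Matrix.conjTranspose_sub, Matrix.conjTranspose_one, hermPZ]
  have hpX : (1 + PX)ᴴ = 1 + PX := by rw [Matrix.conjTranspose_add, Matrix.conjTranspose_one, hermPX]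
  have hmX : (1 - PX)ᴴ = 1 - PX := by rw [Matrix.conjTranspose_sub, Matrix.conjTranspose_one, hermPX]
  have hQ0 : (Q' 0)ᴴ = Q' 0 := by
    rw [qe0, Matrix.conjTranspose_smul, kron_conjT, kron_conjT, hpZ, hpX, hmZ, star18]
  have hQ1 : (Q' 1)ᴴ = Q' 1 := by
    rw [qe1, Matrix.conjTranspose_smul, kron_conjT, kron_conjT, hpZ, hmX, star18]
  have hQ2 : (Q' 2)ᴴ = Q' 2 := by
    rw [qe2, Matrix.conjTranspose_smul, kron_conjT, kron_conjT, hmZ, hpX, hpZ, star18]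
  have hQ3 : (Q' 3)ᴴ = Q' 3 := by
    rw [qe3, Matrix.conjTranspose_smul, kron_conjT, kron_conjT, hmZ, hmX, star18]
  -- sandwiches with the projectors
  have q0 : Q' 0 * H * Q' 0 = ((1/2+α)*(1/2+α)*(1/2-α)) • Q' 0 := by
    rw [qe0, hH]
    simp only [Matrix.smul_mul, Matrix.mul_smul, ← Matrix.mul_kronecker_mul]
    rw [l_Zp, l_Xp, l_Zm]
    simp only [Matrix.smul_kronecker, Matrix.kronecker_smul]
    module
  have q1 : Q' 1 * H * Q' 1 = ((1/2+α)*(1/2-α)*(1/2+α)) • Q' 1 := by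
    rw [qe1, hH]
    simp only [Matrix.smul_mul, Matrix.mul_smul, ← Matrix.mul_kronecker_mul]
    rw [l_Zp, l_Xm]
    simp only [Matrix.smul_kronecker, Matrix.kronecker_smul]
    module
  have q2 : Q' 2 * H * Q' 2 = ((1/2-α)*(1/2+α)*(1/2+α)) • Q' 2 := by
    rw [qe2, hH]
    simp only [Matrix.smul_mul, Matrix.mul_smul, ← Matrix.mul_kronecker_mul]
    rw [l_Zm, l_Xp, l_Zp]
    simp only [Matrix.smul_kronecker, Matrix.kronecker_smul]
    module
  have q3 : Q' 3 * H * Q' 3 = ((1/2-α)*(1/2-α)*(1/2-α)) • Q' 3 := by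
    rw [qe3, hH]
    simp only [Matrix.smul_mul, Matrix.mul_smul, ← Matrix.mul_kronecker_mul]
    rw [l_Zm, l_Xm]
    simp only [Matrix.smul_kronecker, Matrix.kronecker_smul]
    module
  -- sandwiches with the Pauli strings
  have hA1T : A1ᴴ = A1 := by unfold A1; rw [kron_conjT, kron_conjT, hermPZ, hermPX]
  have hA3T : A3ᴴ = A3 := by unfold A3; rw [kron_conjT, kron_conjT, hermPZ, hermPX]
  have hA1H : A1ᴴ * H * A1
      = (((1/2:ℂ) • 1 + (-α) • PZ) ⊗ₖ ((1/2:ℂ) • 1 + (-α) • PX)) ⊗ₖ ((1/2:ℂ) • 1 + α • PZ) := by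
    rw [hA1T, hH]
    unfold A1
    simp only [← Matrix.mul_kronecker_mul]
    rw [c_XD, c_ZE, c_ZD]
  have hA3H : A3ᴴ * H * A3
      = (((1/2:ℂ) • 1 + α • PZ) ⊗ₖ ((1/2:ℂ) • 1 + (-α) • PX)) ⊗ₖ ((1/2:ℂ) • 1 + (-α) • PZ) := by
    rw [hA3T, hH]
    unfold A3
    simp only [← Matrix.mul_kronecker_mul]
    rw [c_ZD, c_ZE, c_XD]
  have e13 : A1 * A3 = ((PX * PZ) ⊗ₖ (PZ * PZ)) ⊗ₖ (PZ * PX) := by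
    unfold A1 A3
    simp only [← Matrix.mul_kronecker_mul]
  have hA13H : (A1 * A3)ᴴ * H * (A1 * A3)
      = (((1/2:ℂ) • 1 + (-α) • PZ) ⊗ₖ ((1/2:ℂ) • 1 + α • PX)) ⊗ₖ ((1/2:ℂ) • 1 + (-α) • PZ) := by
    rw [e13, hH, kron_conjT, kron_conjT, Matrix.conjTranspose_mul, Matrix.conjTranspose_mul,
      Matrix.conjTranspose_mul, hermPZ, hermPX]
    simp only [← Matrix.mul_kronecker_mul]
    rw [c13_D, c13_E, c13_D']
  -- nonvanishing denominators over ℂ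
  have hz1 : ((1:ℂ)/2 + (a:ℂ)) ≠ 0 := by
    have := Complex.ofReal_ne_zero.mpr h2a'.ne'
    push_cast at this
    convert this using 2
  have hz2 : ((1:ℂ)/2 - (a:ℂ)) ≠ 0 := by
    have := Complex.ofReal_ne_zero.mpr h2a.ne'
    push_cast at this
    convert this using 2
  have hz3 : ((1:ℂ)/8 + (a:ℂ)^3) ≠ 0 := by
    have := Complex.ofReal_ne_zero.mpr h3a.ne'
    push_cast at this
    convert this using 2
  have hD1 : ((1/2 + (a:ℂ))^2 * (1/2 - (a:ℂ)) * (1/8 + (a:ℂ)^3)) ≠ 0 :=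
    mul_ne_zero (mul_ne_zero (pow_ne_zero _ hz1) hz2) hz3
  have hD4 : ((1/2 - (a:ℂ))^3 * (1/8 + (a:ℂ)^3)) ≠ 0 :=
    mul_ne_zero (pow_ne_zero _ hz2) hz3
  -- scalar identities
  have s0 : ((2*a^3 / ((1/2 + a)^2 * (1/2 - a) * (1/8 + a^3)) : ℝ) : ℂ)
      * ((1/2+α)*(1/2+α)*(1/2-α)) = 2*α^3/(1/8+α^3) := by
    simp only [hα]
    push_cast
    rw [div_mul_eq_mul_div, div_eq_div_iff hD1 hz3]
    ring
  have s1 : ((2*a^3 / ((1/2 + a)^2 * (1/2 - a) * (1/8 + a^3)) : ℝ) : ℂ)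
      * ((1/2+α)*(1/2-α)*(1/2+α)) = 2*α^3/(1/8+α^3) := by
    simp only [hα]
    push_cast
    rw [div_mul_eq_mul_div, div_eq_div_iff hD1 hz3]
    ring
  have s2 : ((2*a^3 / ((1/2 + a)^2 * (1/2 - a) * (1/8 + a^3)) : ℝ) : ℂ)
      * ((1/2-α)*(1/2+α)*(1/2+α)) = 2*α^3/(1/8+α^3) := by
    simp only [hα]
    push_cast
    rw [div_mul_eq_mul_div, div_eq_div_iff hD1 hz3]
    ring
  have s3 : ((2*a^3 / ((1/2 - a)^3 * (1/8 + a^3)) : ℝ) : ℂ)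
      * ((1/2-α)*(1/2-α)*(1/2-α)) = 2*α^3/(1/8+α^3) := by
    simp only [hα]
    push_cast
    rw [div_mul_eq_mul_div, div_eq_div_iff hD4 hz3]
    ring
  -- expand the sum
  rw [Fin.sum_univ_eight]
  have e0 : Kraus a h 0 = ((Real.sqrt (2*a^3 / ((1/2 + a)^2 * (1/2 - a) * (1/8 + a^3))) : ℝ) : ℂ) • (h * Q' 0) := rfl
  have e1 : Kraus a h 1 = ((Real.sqrt (2*a^3 / ((1/2 + a)^2 * (1/2 - a) * (1/8 + a^3))) : ℝ) : ℂ) • (h * Q' 1) := rfl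
  have e2 : Kraus a h 2 = ((Real.sqrt (2*a^3 / ((1/2 + a)^2 * (1/2 - a) * (1/8 + a^3))) : ℝ) : ℂ) • (h * Q' 2) := rfl
  have e3 : Kraus a h 3 = ((Real.sqrt (2*a^3 / ((1/2 - a)^3 * (1/8 + a^3))) : ℝ) : ℂ) • (h * Q' 3) := rfl
  have e4 : Kraus a h 4 = ((1/2 * Real.sqrt (1 / (1/8 + a^3)) : ℝ) : ℂ) • h := rfl
  have e5 : Kraus a h 5 = (((1/2 * Real.sqrt (1 / (1/8 + a^3)) : ℝ) : ℂ) • h) * A1 := rfl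
  have e6 : Kraus a h 6 = (((1/2 * Real.sqrt (1 / (1/8 + a^3)) : ℝ) : ℂ) • h) * A3 := rfl
  have e7 : Kraus a h 7 = (((1/2 * Real.sqrt (1 / (1/8 + a^3)) : ℝ) : ℂ) • h) * (A1 * A3) := rfl
  rw [e0, e1, e2, e3, e4, e5, e6, e7, key _ (Q' 0), key _ (Q' 1), key _ (Q' 2), key _ (Q' 3),
    key5, keyA _ A1, keyA _ A3, keyA _ (A1 * A3)]
  simp only [r1, r4, r5]
  rw [hQ0, hQ1, hQ2, hQ3, q0, q1, q2, q3, hA1H, hA3H, hA13H]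
  simp only [smul_smul]
  rw [s0, s1, s2, s3, hH]
  -- final scalar bookkeeping
  have hz3' : (1 + (a:ℂ)^3*8) ≠ 0 := fun hc => hz3 (by linear_combination hc/8)
  have f1 : (2*α^3/(1/8+α^3)) * (1/2) + ((1/(4*(1/8 + a^3)) : ℝ) : ℂ) * (1/2) = 1 := by
    simp only [hα]
    push_cast
    field_simp [hz3, hz3']
    ring
  have f2 : ((1/(4*(1/8 + a^3)) : ℝ) : ℂ) * (4*α^3) - (2*α^3/(1/8+α^3)) * (1/2) = 0 := by
    simp only [hα]
    push_cast
    field_simp [hz3, hz3']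
    ring
  calc (2*α^3/(1/8+α^3)) • Q' 0 + (2*α^3/(1/8+α^3)) • Q' 1 + (2*α^3/(1/8+α^3)) • Q' 2
        + (2*α^3/(1/8+α^3)) • Q' 3
        + ((1/(4*(1/8 + a^3)) : ℝ) : ℂ) • ((((1/2:ℂ) • 1 + α • PZ) ⊗ₖ ((1/2:ℂ) • 1 + α • PX)) ⊗ₖ ((1/2:ℂ) • 1 + α • PZ))
        + ((1/(4*(1/8 + a^3)) : ℝ) : ℂ) • ((((1/2:ℂ) • 1 + (-α) • PZ) ⊗ₖ ((1/2:ℂ) • 1 + (-α) • PX)) ⊗ₖ ((1/2:ℂ) • 1 + α • PZ))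
        + ((1/(4*(1/8 + a^3)) : ℝ) : ℂ) • ((((1/2:ℂ) • 1 + α • PZ) ⊗ₖ ((1/2:ℂ) • 1 + (-α) • PX)) ⊗ₖ ((1/2:ℂ) • 1 + (-α) • PZ))
        + ((1/(4*(1/8 + a^3)) : ℝ) : ℂ) • ((((1/2:ℂ) • 1 + (-α) • PZ) ⊗ₖ ((1/2:ℂ) • 1 + α • PX)) ⊗ₖ ((1/2:ℂ) • 1 + (-α) • PZ))
      = (2*α^3/(1/8+α^3)) • (Q' 0 + Q' 1 + Q' 2 + Q' 3)
        + ((1/(4*(1/8 + a^3)) : ℝ) : ℂ) •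
          (((((1/2:ℂ) • 1 + α • PZ) ⊗ₖ ((1/2:ℂ) • 1 + α • PX)) ⊗ₖ ((1/2:ℂ) • 1 + α • PZ))
          + ((((1/2:ℂ) • 1 + (-α) • PZ) ⊗ₖ ((1/2:ℂ) • 1 + (-α) • PX)) ⊗ₖ ((1/2:ℂ) • 1 + α • PZ))
          + ((((1/2:ℂ) • 1 + α • PZ) ⊗ₖ ((1/2:ℂ) • 1 + (-α) • PX)) ⊗ₖ ((1/2:ℂ) • 1 + (-α) • PZ))
          + ((((1/2:ℂ) • 1 + (-α) • PZ) ⊗ₖ ((1/2:ℂ) • 1 + α • PX)) ⊗ₖ ((1/2:ℂ) • 1 + (-α) • PZ))) := by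
        module
    _ = (2*α^3/(1/8+α^3)) • ((1/2:ℂ) • 1 - (1/2:ℂ) • ((PZ ⊗ₖ PX) ⊗ₖ PZ))
        + ((1/(4*(1/8 + a^3)) : ℝ) : ℂ) • ((1/2:ℂ) • 1 + (4*α^3) • ((PZ ⊗ₖ PX) ⊗ₖ PZ)) := by
        rw [Qsum, Hsum α]
    _ = ((2*α^3/(1/8+α^3)) * (1/2) + ((1/(4*(1/8 + a^3)) : ℝ) : ℂ) * (1/2)) • (1 : Matrix ((Fin 2 × Fin 2) × Fin 2) ((Fin 2 × Fin 2) × Fin 2) ℂ)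
        + (((1/(4*(1/8 + a^3)) : ℝ) : ℂ) * (4*α^3) - (2*α^3/(1/8+α^3)) * (1/2)) • ((PZ ⊗ₖ PX) ⊗ₖ PZ) := by
        module
    _ = (1:ℂ) • (1 : Matrix ((Fin 2 × Fin 2) × Fin 2) ((Fin 2 × Fin 2) × Fin 2) ℂ)
        + (0:ℂ) • ((PZ ⊗ₖ PX) ⊗ₖ PZ) := by rw [f1, f2]
    _ = 1 := by simp
end

section
/- Suppose a state transformation g|ψ⟩ → h|ψ⟩ (both normalized) satisfies the SEP₁ condition ∑ₖ pₖ Sₖ†HSₖ = G with unitary Sₖ, and consider any operator N = N⁽¹⁾⊗N⁽²⁾⊗N⁽³⁾ with Tr(g†N†Ng) > 0 added: then the modified equation ∑ₖ pₖ' Sₖ†HSₖ + g†N†Ng = G has no solution with ∑ₖ pₖ' = 1, pₖ' ≥ 0, when Tr(G) = Tr(H). I.e., under Tr(G) = Tr(H) and unitary stabilizer, the SEP and SEP₁ conditions for the transformation are equivalent. -/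
open Matrix BigOperators

/-- Equality case of Lemma 3: if the SEP₁ condition `∑ₖ pₖ Sₖ†HSₖ = G` holds with unitary
`Sₖ` and `Tr(G) = Tr(H)`, then no operator `N = N⁽¹⁾⊗N⁽²⁾⊗N⁽³⁾` with `Tr(g†N†Ng) > 0` can
be added: the modified equation `∑ₖ pₖ' Sₖ†HSₖ + g†N†Ng = G` has no solution. -/
theorem sep_eq_sep1_unitary_stabilizer {d : Fin 3 → ℕ}
    (g h : Matrix (∀ i, Fin (d i)) (∀ i, Fin (d i)) ℂ) (hg : IsUnit g)
    (htr : (gᴴ * g).trace = (hᴴ * h).trace)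
    (K : ℕ) (S : Fin K → Matrix (∀ i, Fin (d i)) (∀ i, Fin (d i)) ℂ)
    (hS : ∀ k, (S k)ᴴ * S k = 1)
    (p : Fin K → ℝ) (hp : ∀ k, 0 ≤ p k) (hps : ∑ k, p k = 1)
    (hsep1 : ∑ k, (p k : ℂ) • ((S k)ᴴ * (hᴴ * h) * S k) = gᴴ * g)
    (N : ∀ i, Matrix (Fin (d i)) (Fin (d i)) ℂ)
    (hNtr : 0 < (gᴴ * (tensorOp N)ᴴ * tensorOp N * g).trace.re) :
    ¬ ∃ p' : Fin K → ℝ, (∀ k, 0 ≤ p' k) ∧ (∑ k, p' k = 1) ∧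
      ∑ k, (p' k : ℂ) • ((S k)ᴴ * (hᴴ * h) * S k)
        + gᴴ * (tensorOp N)ᴴ * tensorOp N * g = gᴴ * g := by
  rintro ⟨p', hp', hps', heq⟩
  have key : ∀ k, ((S k)ᴴ * (hᴴ * h) * S k).trace = (hᴴ * h).trace := fun k => by
    rw [Matrix.trace_mul_cycle, ← Matrix.mul_assoc, mul_eq_one_comm.mp (hS k), Matrix.one_mul]
  have htr2 := congrArg Matrix.trace heq
  rw [Matrix.trace_add, Matrix.trace_sum] at htr2
  simp only [Matrix.trace_smul, key, htr] at htr2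
  have hsum : ∑ k, (p' k : ℂ) • (hᴴ * h).trace = (hᴴ * h).trace := by
    rw [← Finset.sum_smul]
    norm_cast
    rw [hps', one_smul]
  rw [hsum] at htr2
  have h0 : (gᴴ * (tensorOp N)ᴴ * tensorOp N * g).trace = 0 := by
    linear_combination htr2
  rw [h0] at hNtr
  simp at hNtr
end
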